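/- arXiv:2501.19272 — 4 statements merged into one kernel-verified Lean document; each statement's English description precedes it below -/
import Mathlib

section
/- For complex numbers A, B with |A|, |B| < 1, the Omega operator applied to 1/((1-Aλ)(1-B/λ)) equals 1/((1-A)(1-AB)); that is, summing the coefficient of λ^s over all s ≥ 0 in the bilateral Laurent expansion of 1/((1-Aλ)(1-B/λ)) gives 1/((1-A)(1-AB)). Equivalently, as formal power series: ∑_{i,j≥0, i≥j} A^i B^j = 1/((1-A)(1-AB)). -/
def omegaEquiv : ℕ × ℕ ≃ {p : ℕ × ℕ // p.2 ≤ p.1} where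
  toFun q := ⟨(q.2 + q.1, q.2), Nat.le_add_right _ _⟩
  invFun p := (p.1.1 - p.1.2, p.1.2)
  left_inv q := by simp
  right_inv p := by
    rcases p with ⟨⟨i, j⟩, h⟩
    simp [Nat.add_sub_cancel' h]

/-- MacMahon's Omega elimination rule
`Ω≥ 1/((1-Aλ)(1-B/λ)) = 1/((1-A)(1-AB))`, stated as
`∑_{i ≥ j ≥ 0} A^i B^j = 1/((1-A)(1-AB))`. -/
theorem stmt0 (A B : ℂ) (hA : ‖A‖ < 1) (hB : ‖B‖ < 1) :
    (∑' p : {p : ℕ × ℕ // p.2 ≤ p.1}, A ^ (p : ℕ × ℕ).1 * B ^ (p : ℕ × ℕ).2) =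
      1 / ((1 - A) * (1 - A * B)) := by
  have hAB : ‖A * B‖ < 1 := by
    calc ‖A * B‖ = ‖A‖ * ‖B‖ := norm_mul A B
    _ < 1 := mul_lt_one_of_nonneg_of_lt_one_left (norm_nonneg _) hA (le_of_lt hB)
  have hsA : Summable (fun k : ℕ => A ^ k) := summable_geometric_of_norm_lt_one hA
  have hsAB : Summable (fun j : ℕ => (A * B) ^ j) := summable_geometric_of_norm_lt_one hAB
  rw [← omegaEquiv.tsum_eq]
  have : (fun q : ℕ × ℕ => A ^ ((omegaEquiv q : ℕ × ℕ)).1 * B ^ ((omegaEquiv q : ℕ × ℕ)).2)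
      = fun q : ℕ × ℕ => A ^ q.1 * (A * B) ^ q.2 := by
    funext q
    simp [omegaEquiv, pow_add, mul_pow]
    ring
  rw [this, ← tsum_mul_tsum_of_summable_norm (by simpa using hsA.norm)
    (by simpa using hsAB.norm), tsum_geometric_of_norm_lt_one hA,
    tsum_geometric_of_norm_lt_one hAB]
  rw [one_div, mul_inv]
end

section
/- As formal power series: ∑ over nonnegative integers i,j,k,l with i+j ≥ l and k+l ≥ j of A^i B^j C^k D^l equals (1-ABCD)/((1-A)(1-C)(1-AD)(1-BC)(1-BD)). -/
set_option maxHeartbeats 1000000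

open Set

private lemma geo_norm {x : ℂ} (hx : ‖x‖ < 1) : Summable (fun n : ℕ => ‖x ^ n‖) := by
  simpa [norm_pow] using summable_geometric_of_lt_one (norm_nonneg x) hx

private lemma one_sub_ne {x : ℂ} (hx : ‖x‖ < 1) : 1 - x ≠ 0 := by
  intro h
  rw [sub_eq_zero] at h
  rw [← h] at hx
  simp at hx

private lemma norm_mul_lt {x y : ℂ} (hx : ‖x‖ < 1) (hy : ‖y‖ < 1) : ‖x * y‖ < 1 := by
  rw [norm_mul]
  nlinarith [norm_nonneg x, norm_nonneg y]

private lemma quad_norm {w x y z : ℂ} (hw : ‖w‖ < 1) (hx : ‖x‖ < 1) (hy : ‖y‖ < 1)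
    (hz : ‖z‖ < 1) :
    Summable (fun p : ℕ × ℕ × ℕ × ℕ =>
      ‖w ^ p.1 * (x ^ p.2.1 * (y ^ p.2.2.1 * z ^ p.2.2.2))‖) := by
  have h3 : Summable (fun q : ℕ × ℕ => ‖y ^ q.1 * z ^ q.2‖) :=
    (geo_norm hy).mul_norm (geo_norm hz)
  have h2 : Summable (fun r : ℕ × ℕ × ℕ => ‖x ^ r.1 * (y ^ r.2.1 * z ^ r.2.2)‖) :=
    Summable.mul_norm (geo_norm hx) (f := fun n : ℕ => x ^ n)
      (g := fun q : ℕ × ℕ => y ^ q.1 * z ^ q.2) h3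
  exact Summable.mul_norm (geo_norm hw) (f := fun n : ℕ => w ^ n)
    (g := fun r : ℕ × ℕ × ℕ => x ^ r.1 * (y ^ r.2.1 * z ^ r.2.2)) h2

private lemma quad_tsum {w x y z : ℂ} (hw : ‖w‖ < 1) (hx : ‖x‖ < 1) (hy : ‖y‖ < 1)
    (hz : ‖z‖ < 1) :
    (∑' p : ℕ × ℕ × ℕ × ℕ, w ^ p.1 * (x ^ p.2.1 * (y ^ p.2.2.1 * z ^ p.2.2.2))) =
      (1 - w)⁻¹ * ((1 - x)⁻¹ * ((1 - y)⁻¹ * (1 - z)⁻¹)) := by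
  have h1 : (∑' q : ℕ × ℕ, y ^ q.1 * z ^ q.2) = (1 - y)⁻¹ * (1 - z)⁻¹ := by
    rw [← tsum_mul_tsum_of_summable_norm (geo_norm hy) (geo_norm hz),
      tsum_geometric_of_norm_lt_one hy, tsum_geometric_of_norm_lt_one hz]
  have h2 : (∑' r : ℕ × ℕ × ℕ, x ^ r.1 * (y ^ r.2.1 * z ^ r.2.2)) =
      (1 - x)⁻¹ * ((1 - y)⁻¹ * (1 - z)⁻¹) := by
    rw [← tsum_mul_tsum_of_summable_norm (geo_norm hx) ((geo_norm hy).mul_norm (geo_norm hz)),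
      tsum_geometric_of_norm_lt_one hx, h1]
  rw [← tsum_mul_tsum_of_summable_norm (geo_norm hw)
      ((geo_norm hx).mul_norm ((geo_norm hy).mul_norm (geo_norm hz))),
    tsum_geometric_of_norm_lt_one hw, h2]

/-- The two-parameter Omega elimination rule
`Ω≥ 1/((1-Aλ)(1-Bλ/μ)(1-Cμ)(1-Dμ/λ)) = (1-ABCD)/((1-A)(1-C)(1-AD)(1-BC)(1-BD))`,
stated as the sum over `i,j,k,l ≥ 0` with `i+j ≥ l` and `k+l ≥ j` of `A^i B^j C^k D^l`. -/
theorem stmt2 (A B C D : ℂ) (hA : ‖A‖ < 1) (hB : ‖B‖ < 1) (hC : ‖C‖ < 1) (hD : ‖D‖ < 1) :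
    (∑' p : {p : ℕ × ℕ × ℕ × ℕ // p.2.2.2 ≤ p.1 + p.2.1 ∧ p.2.1 ≤ p.2.2.1 + p.2.2.2},
        A ^ (p : ℕ × ℕ × ℕ × ℕ).1 * B ^ (p : ℕ × ℕ × ℕ × ℕ).2.1 *
          C ^ (p : ℕ × ℕ × ℕ × ℕ).2.2.1 * D ^ (p : ℕ × ℕ × ℕ × ℕ).2.2.2) =
      (1 - A * B * C * D) /
        ((1 - A) * (1 - C) * (1 - A * D) * (1 - B * C) * (1 - B * D)) := by
  have hAD : ‖A * D‖ < 1 := norm_mul_lt hA hD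
  have hBD : ‖B * D‖ < 1 := norm_mul_lt hB hD
  have hBC : ‖B * C‖ < 1 := norm_mul_lt hB hC
  set f : ℕ × ℕ × ℕ × ℕ → ℂ :=
    fun p => A ^ p.1 * B ^ p.2.1 * C ^ p.2.2.1 * D ^ p.2.2.2 with hfdef
  have hsumf : Summable f := by
    apply Summable.of_norm
    have := quad_norm hA hB hC hD
    simpa [hfdef, mul_assoc] using this
  set S : Set (ℕ × ℕ × ℕ × ℕ) :=
    {p | p.2.2.2 ≤ p.1 + p.2.1 ∧ p.2.1 ≤ p.2.2.1 + p.2.2.2} with hSdef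
  set S1 : Set (ℕ × ℕ × ℕ × ℕ) := {p | p.1 + p.2.1 < p.2.2.2} with hS1def
  set S2 : Set (ℕ × ℕ × ℕ × ℕ) := {p | p.2.2.1 + p.2.2.2 < p.2.1} with hS2def
  have key : ∀ p : ℕ × ℕ × ℕ × ℕ,
      S.indicator f p + (S1.indicator f p + S2.indicator f p) = f p := by
    rintro ⟨i, j, k, l⟩
    by_cases h1 : l ≤ i + j ∧ j ≤ k + l
    · rw [indicator_of_mem (show (i, j, k, l) ∈ S from h1) f,
        indicator_of_notMem (show (i, j, k, l) ∉ S1 by simp only [hS1def, mem_setOf_eq]; omega) f,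
        indicator_of_notMem (show (i, j, k, l) ∉ S2 by simp only [hS2def, mem_setOf_eq]; omega) f]
      ring
    · by_cases h2 : i + j < l
      · rw [indicator_of_notMem (show (i, j, k, l) ∉ S from h1) f,
          indicator_of_mem (show (i, j, k, l) ∈ S1 from h2) f,
          indicator_of_notMem (show (i, j, k, l) ∉ S2 by simp only [hS2def, mem_setOf_eq]; omega) f]
        ring
      · have h3 : k + l < j := by
          simp only [hSdef, mem_setOf_eq, not_and, not_le] at h1; omega
        rw [indicator_of_notMem (show (i, j, k, l) ∉ S from h1) f,
          indicator_of_notMem (show (i, j, k, l) ∉ S1 from h2) f,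
          indicator_of_mem (show (i, j, k, l) ∈ S2 from h3) f]
        ring
  -- Sum over S1
  have hT1 : (∑' x, S1.indicator f x) =
      D * ((1 - A * D)⁻¹ * ((1 - B * D)⁻¹ * ((1 - C)⁻¹ * (1 - D)⁻¹))) := by
    set e : ℕ × ℕ × ℕ × ℕ → ℕ × ℕ × ℕ × ℕ :=
      fun q => (q.1, q.2.1, q.2.2.1, q.1 + q.2.1 + q.2.2.2 + 1) with hedef
    have hinj : Function.Injective e := by
      rintro ⟨a, b, c, d⟩ ⟨a', b', c', d'⟩ h
      simp [hedef, Prod.mk.injEq] at h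
      simp [Prod.mk.injEq]
      omega
    have hrange : Function.support (S1.indicator f) ⊆ Set.range e := by
      rintro ⟨i, j, k, l⟩ hx
      have hmem : (i, j, k, l) ∈ S1 := by
        by_contra hc
        exact hx (indicator_of_notMem hc f)
      simp only [hS1def, mem_setOf_eq] at hmem
      refine ⟨(i, j, k, l - (i + j + 1)), ?_⟩
      simp [hedef, Prod.mk.injEq]
      omega
    rw [← hinj.tsum_eq hrange]
    have heq : ∀ q : ℕ × ℕ × ℕ × ℕ, S1.indicator f (e q) =
        D * ((A * D) ^ q.1 * ((B * D) ^ q.2.1 * (C ^ q.2.2.1 * D ^ q.2.2.2))) := by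
      rintro ⟨a, b, c, m⟩
      rw [indicator_of_mem (show e (a, b, c, m) ∈ S1 by
        simp only [hS1def, hedef, mem_setOf_eq]; omega) f]
      simp only [hfdef, hedef]
      ring
    rw [tsum_congr heq, tsum_mul_left, quad_tsum hAD hBD hC hD]
  -- Sum over S2
  have hT2 : (∑' x, S2.indicator f x) =
      B * ((1 - A)⁻¹ * ((1 - B)⁻¹ * ((1 - B * C)⁻¹ * (1 - B * D)⁻¹))) := by
    set e : ℕ × ℕ × ℕ × ℕ → ℕ × ℕ × ℕ × ℕ :=
      fun q => (q.1, q.2.2.1 + q.2.2.2 + q.2.1 + 1, q.2.2.1, q.2.2.2) with hedef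
    have hinj : Function.Injective e := by
      rintro ⟨a, b, c, d⟩ ⟨a', b', c', d'⟩ h
      simp [hedef, Prod.mk.injEq] at h
      simp [Prod.mk.injEq]
      omega
    have hrange : Function.support (S2.indicator f) ⊆ Set.range e := by
      rintro ⟨i, j, k, l⟩ hx
      have hmem : (i, j, k, l) ∈ S2 := by
        by_contra hc
        exact hx (indicator_of_notMem hc f)
      simp only [hS2def, mem_setOf_eq] at hmem
      refine ⟨(i, j - (k + l + 1), k, l), ?_⟩
      simp [hedef, Prod.mk.injEq]
      omega
    rw [← hinj.tsum_eq hrange]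
    have heq : ∀ q : ℕ × ℕ × ℕ × ℕ, S2.indicator f (e q) =
        B * (A ^ q.1 * (B ^ q.2.1 * ((B * C) ^ q.2.2.1 * (B * D) ^ q.2.2.2))) := by
      rintro ⟨a, n, c, d⟩
      rw [indicator_of_mem (show e (a, n, c, d) ∈ S2 by
        simp only [hS2def, hedef, mem_setOf_eq]; omega) f]
      simp only [hfdef, hedef]
      ring
    rw [tsum_congr heq, tsum_mul_left, quad_tsum hA hB hBC hBD]
  -- Total sum
  have hTot : (∑' x, f x) = (1 - A)⁻¹ * ((1 - B)⁻¹ * ((1 - C)⁻¹ * (1 - D)⁻¹)) := by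
    rw [← quad_tsum hA hB hC hD]
    exact tsum_congr fun p => by simp [hfdef, mul_assoc]
  have hsplit : (∑' x, f x) =
      (∑' x, S.indicator f x) + ((∑' x, S1.indicator f x) + (∑' x, S2.indicator f x)) := by
    rw [← Summable.tsum_add (hsumf.indicator S1) (hsumf.indicator S2),
      ← Summable.tsum_add (hsumf.indicator S) ((hsumf.indicator S1).add (hsumf.indicator S2))]
    exact (tsum_congr key).symm
  have hgoal : (∑' x : S, f x) = (∑' x, S.indicator f x) := tsum_subtype S f
  have hmain : (∑' x : S, f x) =
      (1 - A)⁻¹ * ((1 - B)⁻¹ * ((1 - C)⁻¹ * (1 - D)⁻¹)) -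
        D * ((1 - A * D)⁻¹ * ((1 - B * D)⁻¹ * ((1 - C)⁻¹ * (1 - D)⁻¹))) -
        B * ((1 - A)⁻¹ * ((1 - B)⁻¹ * ((1 - B * C)⁻¹ * (1 - B * D)⁻¹))) := by
    rw [hgoal]
    have h : (∑' x, S.indicator f x) =
        (∑' x, f x) - ((∑' x, S1.indicator f x) + (∑' x, S2.indicator f x)) := by
      rw [hsplit]; ring
    rw [h, hTot, hT1, hT2]; ring
  have hfinal : (∑' x : S, f x) =
      (1 - A * B * C * D) /
        ((1 - A) * (1 - C) * (1 - A * D) * (1 - B * C) * (1 - B * D)) := by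
    rw [hmain]
    have h1 := one_sub_ne hA
    have h2 := one_sub_ne hB
    have h3 := one_sub_ne hC
    have h4 := one_sub_ne hD
    have h5 := one_sub_ne hAD
    have h6 := one_sub_ne hBD
    have h7 := one_sub_ne hBC
    have e1 : (1 - A)⁻¹ * ((1 - B)⁻¹ * ((1 - C)⁻¹ * (1 - D)⁻¹)) =
        1 / ((1 - A) * ((1 - B) * ((1 - C) * (1 - D)))) := by
      rw [one_div, mul_inv, mul_inv, mul_inv]
    have e2 : D * ((1 - A * D)⁻¹ * ((1 - B * D)⁻¹ * ((1 - C)⁻¹ * (1 - D)⁻¹))) =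
        D / ((1 - A * D) * ((1 - B * D) * ((1 - C) * (1 - D)))) := by
      rw [div_eq_mul_inv, mul_inv, mul_inv, mul_inv]
    have e3 : B * ((1 - A)⁻¹ * ((1 - B)⁻¹ * ((1 - B * C)⁻¹ * (1 - B * D)⁻¹))) =
        B / ((1 - A) * ((1 - B) * ((1 - B * C) * (1 - B * D)))) := by
      rw [div_eq_mul_inv, mul_inv, mul_inv, mul_inv]
    rw [e1, e2, e3]
    have hd1 : ((1 - A) * ((1 - B) * ((1 - C) * (1 - D)))) ≠ 0 :=
      mul_ne_zero h1 (mul_ne_zero h2 (mul_ne_zero h3 h4))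
    have hd2 : ((1 - A * D) * ((1 - B * D) * ((1 - C) * (1 - D)))) ≠ 0 :=
      mul_ne_zero h5 (mul_ne_zero h6 (mul_ne_zero h3 h4))
    have hd3 : ((1 - A) * ((1 - B) * ((1 - B * C) * (1 - B * D)))) ≠ 0 :=
      mul_ne_zero h1 (mul_ne_zero h2 (mul_ne_zero h7 h6))
    have hdR : ((1 - A) * (1 - C) * (1 - A * D) * (1 - B * C) * (1 - B * D)) ≠ 0 :=
      mul_ne_zero (mul_ne_zero (mul_ne_zero (mul_ne_zero h1 h3) h5) h7) h6
    rw [div_sub_div _ _ hd1 hd2, div_sub_div _ _ (mul_ne_zero hd1 hd2) hd3,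
      div_eq_div_iff (mul_ne_zero (mul_ne_zero hd1 hd2) hd3) hdR]
    ring
  exact hfinal
end

section
/- Let CP_{(1,1)}(n) denote the generating function (in q) for cylindric partitions with profile (1,1) in which each of the two constituent partitions has at most n parts. Then CP_{(1,1)}(n) = (-q;q^2)_n / (q;q)_{2n}. -/
/-!
Interleaving `c (2i) = max (a i) (b i)` and `c (2i+1) = min (a i) (b i)` turns the cylindric
conditions into the single condition that `c` is a partition with at most `2n` parts. The pair
`(a, b)` is recovered from `c` and the set `S` of indices with `a i < b i`, and for `i ∈ S` the
descent `c (2i+1) < c (2i)` is strict. Subtracting from `c k` the number `stairs S k` of `i ∈ S`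
with `k ≤ 2i` removes exactly these forced descents and leaves an arbitrary partition `v` with at
most `2n` parts, while `∑ k, stairs S k = ∑ i ∈ S, (2i+1)`. So cylindric partitions of `N`
correspond to pairs `(S, v)` with `∑ i ∈ S, (2i+1) + |v| = N`, and the generating function of
those pairs is `∏ i < n, (1 + q^(2i+1)) · 1/(q;q)_{2n}`.
-/

open PowerSeries Finset

theorem PowerSeries.prod_one_add_X_pow {R ι : Type*} [CommSemiring R] (s : Finset ι)
    (f : ι → ℕ) :
    ∏ j ∈ s, (1 + (X : R⟦X⟧) ^ f j) =
      PowerSeries.mk fun N => (#{t ∈ s.powerset | ∑ j ∈ t, f j = N} : R) := by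
  ext N
  simp only [prod_one_add, prod_pow_eq_pow_sum, map_sum, coeff_X_pow, coeff_mk, sum_boole]
  simp_rw [eq_comm]

namespace CylindricPartition

def partitionsAtMost (m N : ℕ) : Finset (Fin m → ℕ) :=
  {v ∈ Fintype.piFinset fun _ => range (N + 1) | Antitone v ∧ ∑ i, v i = N}

lemma mem_partitionsAtMost {m N : ℕ} {v : Fin m → ℕ} :
    v ∈ partitionsAtMost m N ↔ Antitone v ∧ ∑ i, v i = N := by
  refine ⟨fun h => (mem_filter.mp h).2, fun h => mem_filter.mpr ⟨?_, h⟩⟩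
  simp only [Fintype.mem_piFinset, mem_range, Nat.lt_succ_iff]
  exact fun i => h.2 ▸ single_le_sum (fun _ _ => Nat.zero_le _) (mem_univ i)

lemma card_partitionsAtMost_zero (N : ℕ) :
    #(partitionsAtMost 0 N) = if N = 0 then 1 else 0 := by
  split_ifs with hN
  · subst hN
    rw [card_eq_one]
    exact ⟨Fin.elim0, eq_singleton_iff_unique_mem.mpr
      ⟨mem_partitionsAtMost.mpr ⟨fun i => i.elim0, by simp⟩, fun v _ => Subsingleton.elim _ _⟩⟩
  · rw [card_eq_zero, eq_empty_iff_forall_notMem]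
    intro v hv
    exact hN ((mem_partitionsAtMost.mp hv).2 ▸ by simp)

lemma card_filter_last_eq_zero (m N : ℕ) :
    #{v ∈ partitionsAtMost (m + 1) N | v (Fin.last m) = 0} = #(partitionsAtMost m N) := by
  refine card_nbij' Fin.init (Fin.snoc · 0) ?_ ?_ ?_ ?_
  · intro v hv
    simp only [mem_coe, mem_filter, mem_partitionsAtMost] at hv
    obtain ⟨⟨hanti, hsum⟩, hlast⟩ := hv
    refine mem_partitionsAtMost.mpr ⟨hanti.comp_monotone Fin.strictMono_castSucc.monotone, ?_⟩
    rw [← hsum, Fin.sum_univ_castSucc, hlast, add_zero]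
    rfl
  · intro v hv
    obtain ⟨hanti, hsum⟩ := mem_partitionsAtMost.mp hv
    simp only [mem_coe, mem_filter, mem_partitionsAtMost, Fin.snoc_last, and_true]
    refine ⟨fun i j hij => ?_, by simp [Fin.sum_univ_castSucc, hsum]⟩
    induction j using Fin.lastCases with
    | last => simp
    | cast j =>
      induction i using Fin.lastCases with
      | last => exact absurd hij (not_le.mpr (Fin.castSucc_lt_last j))
      | cast i => simpa using hanti (Fin.castSucc_le_castSucc_iff.mp hij)
  · intro v hv
    simp only [mem_coe, mem_filter] at hv
    simp [← hv.2]
  · intro v _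
    exact Fin.init_snoc _ _

lemma one_le_of_last_ne_zero {m : ℕ} {v : Fin (m + 1) → ℕ} (hv : Antitone v)
    (hlast : v (Fin.last m) ≠ 0) (i : Fin (m + 1)) : 1 ≤ v i :=
  (Nat.one_le_iff_ne_zero.mpr hlast).trans (hv (Fin.le_last i))

lemma card_filter_last_ne_zero (m K : ℕ) :
    #{v ∈ partitionsAtMost (m + 1) (K + (m + 1)) | v (Fin.last m) ≠ 0} =
      #(partitionsAtMost (m + 1) K) := by
  refine card_nbij' (· - 1) (· + 1) ?_ ?_ ?_ ?_
  · intro v hv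
    simp only [mem_coe, mem_filter, mem_partitionsAtMost] at hv
    obtain ⟨⟨hanti, hsum⟩, hlast⟩ := hv
    refine mem_partitionsAtMost.mpr ⟨fun i j hij => Nat.sub_le_sub_right (hanti hij) 1, ?_⟩
    have := sum_tsub_distrib (s := univ) (f := v) (g := fun _ => 1)
      fun i _ => one_le_of_last_ne_zero hanti hlast i
    simp_all
  · intro v hv
    obtain ⟨hanti, hsum⟩ := mem_partitionsAtMost.mp hv
    simp only [mem_coe, mem_filter, mem_partitionsAtMost, Pi.add_apply, Pi.one_apply]
    refine ⟨⟨fun i j hij => Nat.add_le_add_right (hanti hij) 1, ?_⟩, by omega⟩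
    simp [sum_add_distrib, hsum]
  · intro v hv
    simp only [mem_coe, mem_filter, mem_partitionsAtMost] at hv
    funext i
    have := one_le_of_last_ne_zero hv.1.1 hv.2 i
    simp only [Pi.add_apply, Pi.sub_apply, Pi.one_apply]
    omega
  · intro v _
    simp

lemma card_partitionsAtMost_succ (m N : ℕ) :
    #(partitionsAtMost (m + 1) N) =
      #(partitionsAtMost m N) +
        if m + 1 ≤ N then #(partitionsAtMost (m + 1) (N - (m + 1))) else 0 := by
  rw [← card_filter_add_card_filter_not (p := fun v => v (Fin.last m) = 0),
    card_filter_last_eq_zero]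
  split_ifs with h
  · obtain ⟨K, rfl⟩ := Nat.exists_eq_add_of_le' h
    rw [card_filter_last_ne_zero, Nat.add_sub_cancel]
  · refine congrArg _ (card_eq_zero.mpr (filter_eq_empty_iff.mpr fun v hv hlast => h ?_))
    obtain ⟨hanti, hsum⟩ := mem_partitionsAtMost.mp hv
    calc m + 1 = ∑ _ : Fin (m + 1), 1 := by simp
      _ ≤ ∑ i, v i := sum_le_sum fun i _ => one_le_of_last_ne_zero hanti hlast i
      _ = N := hsum

lemma mk_card_partitionsAtMost_mul_prod {R : Type*} [CommRing R] (m : ℕ) :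
    (PowerSeries.mk fun N => (#(partitionsAtMost m N) : R)) *
      ∏ j ∈ range m, (1 - X ^ (j + 1)) = 1 := by
  induction m with
  | zero =>
    ext N
    simp [card_partitionsAtMost_zero, coeff_one]
  | succ m ih =>
    have hrec :
        (PowerSeries.mk fun N => (#(partitionsAtMost (m + 1) N) : R)) * (1 - X ^ (m + 1)) =
          PowerSeries.mk fun N => (#(partitionsAtMost m N) : R) := by
      rw [mul_sub, mul_one, sub_eq_iff_eq_add]
      ext N
      rw [map_add, coeff_mk, coeff_mk, coeff_mul_X_pow', card_partitionsAtMost_succ]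
      split_ifs <;> simp
    rw [prod_range_succ, mul_comm _ (1 - _), ← mul_assoc, hrec, ih]

theorem inv_prod_one_sub_X_pow {k : Type*} [Field k] (m : ℕ) :
    (∏ j ∈ range m, (1 - (X : k⟦X⟧) ^ (j + 1)))⁻¹ =
      PowerSeries.mk fun N => (#(partitionsAtMost m N) : k) := by
  refine (inv_eq_iff_mul_eq_one ?_).mpr (mk_card_partitionsAtMost_mul_prod m)
  simp [map_prod]

def cylindric (n N : ℕ) : Set ((ℕ → ℕ) × (ℕ → ℕ)) :=
  {ab | (∀ i, ab.1 (i + 1) ≤ ab.1 i) ∧ (∀ i, ab.2 (i + 1) ≤ ab.2 i) ∧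
    (∀ i, ab.2 (i + 1) ≤ ab.1 i) ∧ (∀ i, ab.1 (i + 1) ≤ ab.2 i) ∧
    (∀ i, n ≤ i → ab.1 i = 0) ∧ (∀ i, n ≤ i → ab.2 i = 0) ∧
    (∑ i ∈ Finset.range n, (ab.1 i + ab.2 i)) = N}

def interleave (ab : (ℕ → ℕ) × (ℕ → ℕ)) (k : ℕ) : ℕ :=
  if k % 2 = 0 then max (ab.1 (k / 2)) (ab.2 (k / 2)) else min (ab.1 (k / 2)) (ab.2 (k / 2))

section interleave

variable (ab : (ℕ → ℕ) × (ℕ → ℕ)) (i : ℕ)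

@[simp] lemma interleave_two_mul : interleave ab (2 * i) = max (ab.1 i) (ab.2 i) := by
  simp [interleave]

@[simp] lemma interleave_two_mul_add_one :
    interleave ab (2 * i + 1) = min (ab.1 i) (ab.2 i) := by
  simp [interleave, Nat.add_mod, show (2 * i + 1) / 2 = i by omega]

lemma sum_range_add_eq_sum_interleave (n : ℕ) :
    ∑ i ∈ range n, (ab.1 i + ab.2 i) = ∑ k ∈ range (2 * n), interleave ab k := by
  induction n with
  | zero => simp
  | succ n ih =>
    rw [Nat.mul_succ, sum_range_succ, sum_range_succ, sum_range_succ, ih, interleave_two_mul,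
      interleave_two_mul_add_one, add_assoc, max_add_min]

end interleave

lemma antitone_interleave_iff {ab : (ℕ → ℕ) × (ℕ → ℕ)} :
    Antitone (interleave ab) ↔
      (∀ i, ab.1 (i + 1) ≤ ab.1 i) ∧ (∀ i, ab.2 (i + 1) ≤ ab.2 i) ∧
        (∀ i, ab.2 (i + 1) ≤ ab.1 i) ∧ (∀ i, ab.1 (i + 1) ≤ ab.2 i) := by
  have step (i : ℕ) : interleave ab (2 * i + 1 + 1) = max (ab.1 (i + 1)) (ab.2 (i + 1)) := by
    rw [show 2 * i + 1 + 1 = 2 * (i + 1) by ring, interleave_two_mul]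
  constructor
  · intro hc
    have h i : max (ab.1 (i + 1)) (ab.2 (i + 1)) ≤ min (ab.1 i) (ab.2 i) := by
      simpa [step] using hc (Nat.le_succ (2 * i + 1))
    exact ⟨fun i => (le_max_left _ _).trans ((h i).trans (min_le_left _ _)),
      fun i => (le_max_right _ _).trans ((h i).trans (min_le_right _ _)),
      fun i => (le_max_right _ _).trans ((h i).trans (min_le_left _ _)),
      fun i => (le_max_left _ _).trans ((h i).trans (min_le_right _ _))⟩
  · rintro ⟨h1, h2, h3, h4⟩
    refine antitone_nat_of_succ_le fun k => ?_
    obtain ⟨i, rfl | rfl⟩ := Nat.even_or_odd' k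
    · simp
    · rw [step, interleave_two_mul_add_one]
      exact max_le (le_min (h1 i) (h4 i)) (le_min (h3 i) (h2 i))

lemma mem_cylindric_iff {n N : ℕ} {ab : (ℕ → ℕ) × (ℕ → ℕ)} :
    ab ∈ cylindric n N ↔ Antitone (interleave ab) ∧ (∀ k, 2 * n ≤ k → interleave ab k = 0) ∧
      ∑ k ∈ range (2 * n), interleave ab k = N := by
  have hzero : ((∀ i, n ≤ i → ab.1 i = 0) ∧ ∀ i, n ≤ i → ab.2 i = 0) ↔
      ∀ k, 2 * n ≤ k → interleave ab k = 0 := by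
    constructor
    · rintro ⟨ha, hb⟩ k hk
      obtain ⟨i, rfl | rfl⟩ := Nat.even_or_odd' k <;> simp [ha i (by omega), hb i (by omega)]
    · intro h
      have hi i (hi : n ≤ i) : ab.1 i = 0 ∧ ab.2 i = 0 :=
        Nat.max_eq_zero_iff.mp (by simpa using h (2 * i) (by omega))
      exact ⟨fun i h => (hi i h).1, fun i h => (hi i h).2⟩
  simp only [cylindric, Set.mem_ofPred_eq, antitone_interleave_iff, ← hzero,
    sum_range_add_eq_sum_interleave, and_assoc]

def deinterleave (S : Finset ℕ) (c : ℕ → ℕ) : (ℕ → ℕ) × (ℕ → ℕ) :=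
  (fun i => if i ∈ S then c (2 * i + 1) else c (2 * i),
    fun i => if i ∈ S then c (2 * i) else c (2 * i + 1))

lemma interleave_deinterleave {c : ℕ → ℕ} (hc : Antitone c) (S : Finset ℕ) :
    interleave (deinterleave S c) = c := by
  funext k
  have hle (i : ℕ) : c (2 * i + 1) ≤ c (2 * i) := hc (Nat.le_succ _)
  obtain ⟨i, rfl | rfl⟩ := Nat.even_or_odd' k <;> by_cases hi : i ∈ S <;>
    simp [deinterleave, hi, hle i]

lemma deinterleave_interleave {S : Finset ℕ} {ab : (ℕ → ℕ) × (ℕ → ℕ)}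
    (hS : ∀ i, i ∈ S ↔ ab.1 i < ab.2 i) : deinterleave S (interleave ab) = ab := by
  ext i <;> by_cases hi : i ∈ S <;> have hlt := hi <;> rw [hS] at hlt <;>
    simp only [deinterleave, hi, if_true, if_false, interleave_two_mul,
      interleave_two_mul_add_one] <;> omega

def ascents (n : ℕ) (ab : (ℕ → ℕ) × (ℕ → ℕ)) : Finset ℕ := {i ∈ range n | ab.1 i < ab.2 i}

lemma ascents_subset (n : ℕ) (ab : (ℕ → ℕ) × (ℕ → ℕ)) : ascents n ab ⊆ range n :=
  filter_subset _ _

lemma interleave_lt_of_mem_ascents {n i : ℕ} {ab : (ℕ → ℕ) × (ℕ → ℕ)}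
    (hi : i ∈ ascents n ab) : interleave ab (2 * i + 1) < interleave ab (2 * i) := by
  have := (mem_filter.mp hi).2
  simp only [interleave_two_mul, interleave_two_mul_add_one]
  omega

lemma ascents_deinterleave {n : ℕ} {S : Finset ℕ} {c : ℕ → ℕ} (hS : S ⊆ range n)
    (hc : Antitone c) (hlt : ∀ i ∈ S, c (2 * i + 1) < c (2 * i)) :
    ascents n (deinterleave S c) = S := by
  ext i
  rw [ascents, mem_filter, mem_range]
  by_cases hi : i ∈ S
  · simp only [deinterleave, hi, if_true, iff_true]
    exact ⟨mem_range.mp (hS hi), hlt i hi⟩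
  · simp only [deinterleave, hi, if_false, iff_false, not_and, not_lt]
    exact fun _ => hc (Nat.le_succ (2 * i))

def stairs (S : Finset ℕ) (k : ℕ) : ℕ := #{i ∈ S | k ≤ 2 * i}

section stairs

variable (S : Finset ℕ)

lemma stairs_two_mul (i : ℕ) :
    stairs S (2 * i) = stairs S (2 * i + 1) + if i ∈ S then 1 else 0 := by
  simp only [stairs, card_filter, ← sum_ite_eq' S i (fun _ => 1), ← sum_add_distrib]
  refine sum_congr rfl fun j _ => ?_
  split_ifs <;> omega

lemma stairs_two_mul_add_one (i : ℕ) : stairs S (2 * i + 1) = stairs S (2 * i + 1 + 1) := by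
  simp only [stairs]
  congr 1
  exact filter_congr fun j _ => by omega

lemma antitone_stairs : Antitone (stairs S) :=
  fun _ _ hkl => card_le_card (monotone_filter_right S fun _ _ h => hkl.trans h)

variable {S}

lemma stairs_eq_zero {n k : ℕ} (hS : S ⊆ range n) (hk : 2 * n ≤ k) : stairs S k = 0 :=
  card_eq_zero.mpr (filter_eq_empty_iff.mpr fun i hi => by have := mem_range.mp (hS hi); omega)

lemma sum_stairs {n : ℕ} (hS : S ⊆ range n) :
    ∑ k ∈ range (2 * n), stairs S k = ∑ i ∈ S, (2 * i + 1) := by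
  simp only [stairs, card_filter]
  rw [sum_comm]
  refine sum_congr rfl fun i hi => ?_
  have := mem_range.mp (hS hi)
  rw [sum_boole, Nat.cast_id, ← card_range (2 * i + 1)]
  congr 1
  ext k
  simp only [mem_filter, mem_range]
  omega

lemma antitone_sub_stairs {c : ℕ → ℕ} (hc : Antitone c)
    (hlt : ∀ i ∈ S, c (2 * i + 1) < c (2 * i)) : Antitone fun k => (c k : ℤ) - stairs S k := by
  refine antitone_nat_of_succ_le fun k => ?_
  obtain ⟨i, rfl | rfl⟩ := Nat.even_or_odd' k
  · have := hc (Nat.le_add_right (2 * i) 1)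
    rw [stairs_two_mul]
    split_ifs with hi
    · have := hlt i hi
      omega
    · omega
  · have := hc (Nat.le_add_right (2 * i + 1) 1)
    rw [stairs_two_mul_add_one]
    omega

lemma stairs_le {n : ℕ} {c : ℕ → ℕ} (hS : S ⊆ range n) (hc : Antitone c)
    (hlt : ∀ i ∈ S, c (2 * i + 1) < c (2 * i)) (hc0 : c (2 * n) = 0) (k : ℕ) :
    stairs S k ≤ c k := by
  rcases le_total k (2 * n) with hk | hk
  · have := antitone_sub_stairs hc hlt hk
    simp only [hc0, stairs_eq_zero hS le_rfl] at this
    omega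
  · rw [stairs_eq_zero hS hk]
    exact Nat.zero_le _

end stairs

def raise (S : Finset ℕ) {m : ℕ} (v : Fin m → ℕ) (k : ℕ) : ℕ :=
  if h : k < m then v ⟨k, h⟩ + stairs S k else 0

section raise

variable {S : Finset ℕ} {m : ℕ} {v : Fin m → ℕ}

lemma raise_of_lt {k : ℕ} (hk : k < m) : raise S v k = v ⟨k, hk⟩ + stairs S k := dif_pos hk

lemma raise_of_le {k : ℕ} (hk : m ≤ k) : raise S v k = 0 := dif_neg (by omega)

lemma antitone_raise (hv : Antitone v) : Antitone (raise S v) := by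
  intro k l hkl
  by_cases hl : l < m
  · rw [raise_of_lt hl, raise_of_lt (hkl.trans_lt hl)]
    exact add_le_add (hv (show (⟨k, _⟩ : Fin m) ≤ ⟨l, hl⟩ from hkl)) (antitone_stairs S hkl)
  · rw [raise_of_le (not_lt.mp hl)]
    exact Nat.zero_le _

lemma raise_lt {n : ℕ} {v : Fin (2 * n) → ℕ} (hS : S ⊆ range n) (hv : Antitone v) {i : ℕ}
    (hi : i ∈ S) : raise S v (2 * i + 1) < raise S v (2 * i) := by
  have := mem_range.mp (hS hi)
  rw [raise_of_lt (by omega), raise_of_lt (by omega), stairs_two_mul, if_pos hi]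
  have := hv (show (⟨2 * i, by omega⟩ : Fin (2 * n)) ≤ ⟨2 * i + 1, by omega⟩ from
    Nat.le_succ _)
  omega

lemma sum_raise : ∑ k ∈ range m, raise S v k = ∑ j, v j + ∑ k ∈ range m, stairs S k := by
  simp only [← Fin.sum_univ_eq_sum_range, raise_of_lt, Fin.is_lt, Fin.eta, sum_add_distrib]

lemma raise_sub_stairs {c : ℕ → ℕ} (hle : ∀ k, stairs S k ≤ c k)
    (hc : ∀ k, m ≤ k → c k = 0) : raise S (fun j : Fin m => c j - stairs S j) = c := by
  funext k
  by_cases hk : k < m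
  · rw [raise_of_lt hk, Nat.sub_add_cancel (hle k)]
  · rw [raise_of_le (not_lt.mp hk), hc k (not_lt.mp hk)]

lemma sub_stairs_raise (v : Fin m → ℕ) : (fun j : Fin m => raise S v j - stairs S j) = v := by
  funext j
  rw [raise_of_lt j.is_lt, Nat.add_sub_cancel]

end raise

def pairs (n N : ℕ) : Finset (Σ _ : ℕ × ℕ, Finset ℕ × (Fin (2 * n) → ℕ)) :=
  (antidiagonal N).sigma fun p =>
    {S ∈ (range n).powerset | ∑ i ∈ S, (2 * i + 1) = p.1} ×ˢ partitionsAtMost (2 * n) p.2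

lemma mem_pairs {n N w s : ℕ} {S : Finset ℕ} {v : Fin (2 * n) → ℕ} :
    ⟨(w, s), S, v⟩ ∈ pairs n N ↔ w + s = N ∧ (S ⊆ range n ∧ ∑ i ∈ S, (2 * i + 1) = w) ∧
      Antitone v ∧ ∑ j, v j = s := by
  simp [pairs, mem_partitionsAtMost]

lemma card_pairs (n N : ℕ) : #(pairs n N) = ∑ p ∈ antidiagonal N,
    #{S ∈ (range n).powerset | ∑ i ∈ S, (2 * i + 1) = p.1} * #(partitionsAtMost (2 * n) p.2) := by
  simp [pairs]

def toPair (n : ℕ) (ab : (ℕ → ℕ) × (ℕ → ℕ)) : Σ _ : ℕ × ℕ, Finset ℕ × (Fin (2 * n) → ℕ) :=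
  let S := ascents n ab
  let v : Fin (2 * n) → ℕ := fun j => interleave ab j - stairs S j
  ⟨(∑ i ∈ S, (2 * i + 1), ∑ j, v j), S, v⟩

def ofPair {n : ℕ} (x : Σ _ : ℕ × ℕ, Finset ℕ × (Fin (2 * n) → ℕ)) : (ℕ → ℕ) × (ℕ → ℕ) :=
  deinterleave x.2.1 (raise x.2.1 x.2.2)

section bijection

variable {n N : ℕ}

lemma mem_ascents_iff {ab : (ℕ → ℕ) × (ℕ → ℕ)}
    (hzero : ∀ k, 2 * n ≤ k → interleave ab k = 0) (i : ℕ) :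
    i ∈ ascents n ab ↔ ab.1 i < ab.2 i := by
  rw [ascents, mem_filter, mem_range, and_iff_right_iff_imp]
  intro hlt
  by_contra! hi
  have := hzero (2 * i) (by omega)
  rw [interleave_two_mul] at this
  omega

lemma stairs_ascents_le {ab : (ℕ → ℕ) × (ℕ → ℕ)} (h : ab ∈ cylindric n N) (k : ℕ) :
    stairs (ascents n ab) k ≤ interleave ab k := by
  obtain ⟨hanti, hzero, -⟩ := mem_cylindric_iff.mp h
  exact stairs_le (ascents_subset n ab) hanti (fun i => interleave_lt_of_mem_ascents)
    (hzero _ le_rfl) k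

lemma toPair_mem_pairs {ab : (ℕ → ℕ) × (ℕ → ℕ)} (h : ab ∈ cylindric n N) :
    toPair n ab ∈ pairs n N := by
  obtain ⟨hanti, -, hsum⟩ := mem_cylindric_iff.mp h
  have hle := stairs_ascents_le h
  set S := ascents n ab
  have hS : S ⊆ range n := ascents_subset n ab
  refine mem_pairs.mpr ⟨?_, ⟨hS, rfl⟩, fun j j' hjj' => ?_, rfl⟩
  · show ∑ i ∈ S, (2 * i + 1) + ∑ j : Fin (2 * n), (interleave ab j - stairs S j) = N
    rw [← sum_stairs hS, ← hsum, Fin.sum_univ_eq_sum_range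
      (fun k => interleave ab k - stairs S k), ← sum_add_distrib]
    exact sum_congr rfl fun k _ => by have := hle k; omega
  · have hsub : (interleave ab j' : ℤ) - stairs S j' ≤ interleave ab j - stairs S j :=
      antitone_sub_stairs hanti (fun i => interleave_lt_of_mem_ascents)
        (show (j : ℕ) ≤ j' from hjj')
    have := hle j
    have := hle j'
    show interleave ab j' - stairs S j' ≤ interleave ab j - stairs S j
    omega

lemma ofPair_mem_cylindric {x : Σ _ : ℕ × ℕ, Finset ℕ × (Fin (2 * n) → ℕ)}
    (hx : x ∈ pairs n N) : ofPair x ∈ cylindric n N := by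
  obtain ⟨⟨w, s⟩, S, v⟩ := x
  obtain ⟨hN, ⟨hS, hw⟩, hanti, hv⟩ := mem_pairs.mp hx
  have hc := antitone_raise (S := S) hanti
  rw [ofPair, mem_cylindric_iff, interleave_deinterleave hc]
  refine ⟨hc, fun k => raise_of_le, ?_⟩
  rw [sum_raise, sum_stairs hS, hv, hw, add_comm, hN]

lemma ofPair_toPair {ab : (ℕ → ℕ) × (ℕ → ℕ)} (h : ab ∈ cylindric n N) :
    ofPair (toPair n ab) = ab := by
  obtain ⟨-, hzero, -⟩ := mem_cylindric_iff.mp h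
  simp only [ofPair, toPair]
  rw [raise_sub_stairs (stairs_ascents_le h) hzero,
    deinterleave_interleave (mem_ascents_iff hzero)]

lemma toPair_ofPair {x : Σ _ : ℕ × ℕ, Finset ℕ × (Fin (2 * n) → ℕ)}
    (hx : x ∈ pairs n N) : toPair n (ofPair x) = x := by
  obtain ⟨⟨w, s⟩, S, v⟩ := x
  obtain ⟨-, ⟨hS, rfl⟩, hanti, rfl⟩ := mem_pairs.mp hx
  have hc := antitone_raise (S := S) hanti
  simp only [toPair, ofPair]
  rw [ascents_deinterleave hS hc fun i => raise_lt hS hanti, interleave_deinterleave hc,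
    sub_stairs_raise]

theorem ncard_cylindric (n N : ℕ) : (cylindric n N).ncard = #(pairs n N) := by
  rw [← Set.ncard_coe_finset]
  refine (Set.InvOn.bijOn (f := toPair n) (f' := ofPair) ⟨fun ab h => ofPair_toPair h,
    fun x hx => toPair_ofPair hx⟩ (fun ab h => toPair_mem_pairs h)
    (fun x hx => ofPair_mem_cylindric hx)).ncard_eq

end bijection

end CylindricPartition

/-- The generating function for cylindric partitions with profile `(1,1)` with at most `n`
parts in each row equals `(-q;q²)_n / (q;q)_{2n}`.  A cylindric partition with profile
`(1,1)` is a pair of weakly decreasing sequences `a, b` of nonnegative integers, supported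
on the first `n` indices, with `a i ≥ b (i+1)` and `b i ≥ a (i+1)` for all `i`. -/
theorem stmt3 (n : ℕ) :
    (PowerSeries.mk fun N : ℕ =>
        (Set.ncard {ab : (ℕ → ℕ) × (ℕ → ℕ) |
            (∀ i, ab.1 (i + 1) ≤ ab.1 i) ∧ (∀ i, ab.2 (i + 1) ≤ ab.2 i) ∧
            (∀ i, ab.2 (i + 1) ≤ ab.1 i) ∧ (∀ i, ab.1 (i + 1) ≤ ab.2 i) ∧
            (∀ i, n ≤ i → ab.1 i = 0) ∧ (∀ i, n ≤ i → ab.2 i = 0) ∧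
            (∑ i ∈ Finset.range n, (ab.1 i + ab.2 i)) = N} : ℚ)) =
      (∏ j ∈ Finset.range n, (1 + (PowerSeries.X : PowerSeries ℚ) ^ (2 * j + 1))) *
        (∏ j ∈ Finset.range (2 * n), (1 - (PowerSeries.X : PowerSeries ℚ) ^ (j + 1)))⁻¹ := by
  rw [prod_one_add_X_pow, CylindricPartition.inv_prod_one_sub_X_pow]
  ext N
  rw [coeff_mk, coeff_mul]
  change ((CylindricPartition.cylindric n N).ncard : ℚ) = _
  rw [CylindricPartition.ncard_cylindric, CylindricPartition.card_pairs]
  push_cast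
  simp only [coeff_mk]
end

section
/- For every integer n ≥ 0: ∑_{n_1 ≥ 0} q^{n_1^2 + n_1} [n-1 choose n_1]'_{q^2} = ∑_{r=-∞}^{∞} (-1)^r q^{2r^2+r} [2n choose n - 2r + ((-1)^r - 1)/2]_q, where [a choose b]'_q equals 1 if a < 0 and b = 0, and equals the usual Gaussian binomial coefficient otherwise (which is 0 when b < 0 or b > a). -/
open Finset

noncomputable section

abbrev F := RatFunc ℚ

/-- The variable `q`, a transcendental element. -/
def q : F := RatFunc.X

/-- `(b;b)_n = ∏_{i=1}^n (1 - b^i)` -/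
def pq (b : F) (n : ℕ) : F := ∏ i ∈ Finset.range n, (1 - b ^ (i + 1))

/-- Gaussian binomial coefficient in base `b`, zero when `k < 0` or `k > a`. -/
def qbin (b : F) (a k : ℤ) : F :=
  if 0 ≤ k ∧ k ≤ a then pq b a.toNat / (pq b k.toNat * pq b (a - k).toNat) else 0

/-- Primed Gaussian binomial: equals 1 when `a < 0` and `k = 0`. -/
def qbin' (b : F) (a k : ℤ) : F :=
  if a < 0 ∧ k = 0 then 1 else qbin b a k

/-!
Both sides equal `∏_{j<n-1} (1 + q^(2j+2))`. For the left side this is Cauchy's q-binomial theorem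
`∑ₖ b^(k choose 2) xᵏ [m choose k]_b = ∏_{j<m} (1 + x bʲ)` at `b = x = q²`.

On the right write `w r = (-1)^r q^(2r²+r)`. Pascal's rule splits the term
`w r [2n choose n - 2r - ε_r]` (`ε_r` the parity of `r`) into `w r [2n-1 choose n-2r-1]` plus a
difference `c r - c (r+1)` of a finitely supported sequence, so the bilateral sum equals
`T n = ∑_r w r [2n-1 choose n-2r-1]`. Two applications of Pascal's rule give in the same way
`T (n+1) = (1 + q^(2n)) T n`, and `T 1 = 1`. The differences telescope because
`w (r+1) = -w r q^(4r+3)`.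
-/

theorem finsum_add_sub_shift {M : Type*} [AddCommGroup M] {f w : ℤ → M}
    (hf : f.HasFiniteSupport) (hw : w.HasFiniteSupport) :
    ∑ᶠ r, (f r + (w r - w (r + 1))) = ∑ᶠ r, f r := by
  have hw₁ : (fun r => w (r + 1)).HasFiniteSupport :=
    hw.fun_comp_of_injective (add_left_injective 1)
  have hshift : ∑ᶠ r, w (r + 1) = ∑ᶠ r, w r := finsum_comp_equiv (Equiv.addRight 1)
  rw [finsum_add_distrib hf (hw.fun_sub hw₁), finsum_sub_distrib hw hw₁, hshift, sub_self,
    add_zero]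

section QBinomial

variable {b : F}

lemma pq_zero : pq b 0 = 1 := prod_range_zero _

variable (b) in
lemma pq_succ (n : ℕ) : pq b (n + 1) = pq b n * (1 - b ^ (n + 1)) :=
  prod_range_succ _ n

lemma one_sub_pow_succ_ne_zero (hb : ¬IsOfFinOrder b) (n : ℕ) : 1 - b ^ (n + 1) ≠ 0 :=
  fun h => hb (isOfFinOrder_iff_pow_eq_one.mpr ⟨n + 1, n.succ_pos, (sub_eq_zero.mp h).symm⟩)

lemma pq_ne_zero (hb : ¬IsOfFinOrder b) (n : ℕ) : pq b n ≠ 0 :=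
  prod_ne_zero_iff.mpr fun i _ => one_sub_pow_succ_ne_zero hb i

lemma qbin_of_neg {a k : ℤ} (hk : k < 0) : qbin b a k = 0 := if_neg (by omega)

lemma qbin_of_lt {a k : ℤ} (hak : a < k) : qbin b a k = 0 := if_neg (by omega)

lemma qbin_eq_div {a k : ℤ} {K M N : ℕ} (hN : K + M = N) (hk : k = K) (ha : a = N) :
    qbin b a k = pq b N / (pq b K * pq b M) := by
  rw [qbin, if_pos (by omega)]
  congr <;> omega

variable (b) in
lemma qbin_symm (a k : ℤ) : qbin b a (a - k) = qbin b a k := by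
  unfold qbin
  by_cases h : 0 ≤ k ∧ k ≤ a
  · rw [if_pos (by omega), if_pos h, sub_sub_cancel, mul_comm]
  · rw [if_neg (by omega), if_neg h]

lemma qbin_zero_right (hb : ¬IsOfFinOrder b) {a : ℤ} (ha : 0 ≤ a) : qbin b a 0 = 1 := by
  rw [qbin_eq_div (K := 0) (M := a.toNat) (zero_add _) Nat.cast_zero.symm (by omega), pq_zero,
    one_mul, div_self (pq_ne_zero hb _)]

lemma qbin_self (hb : ¬IsOfFinOrder b) {a : ℤ} (ha : 0 ≤ a) : qbin b a a = 1 := by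
  rw [← qbin_symm, sub_self, qbin_zero_right hb ha]

lemma pq_div_pascal (hb : ¬IsOfFinOrder b) (K M : ℕ) :
    pq b (K + M + 1 + 1) / (pq b (K + 1) * pq b (M + 1)) =
      pq b (K + M + 1) / (pq b (K + 1) * pq b M) +
        b ^ (M + 1) * (pq b (K + M + 1) / (pq b K * pq b (M + 1))) := by
  have := pq_ne_zero hb K
  have := pq_ne_zero hb M
  have := one_sub_pow_succ_ne_zero hb K
  have := one_sub_pow_succ_ne_zero hb M
  rw [pq_succ b (K + M + 1), pq_succ b K, pq_succ b M]
  field_simp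
  ring

theorem qbin_pascal_left (hb : ¬IsOfFinOrder b) {a : ℤ} (ha : 0 < a) (k : ℤ) :
    qbin b a k = qbin b (a - 1) k + b ^ (a - k) * qbin b (a - 1) (k - 1) := by
  rcases lt_trichotomy k 0 with hk | rfl | hk
  · rw [qbin_of_neg hk, qbin_of_neg hk, qbin_of_neg (by omega), mul_zero, add_zero]
  · rw [qbin_zero_right hb ha.le, qbin_zero_right hb (by omega), qbin_of_neg (by omega),
      mul_zero, add_zero]
  rcases lt_trichotomy k a with hka | rfl | hka
  · obtain ⟨K, hK⟩ : ∃ K : ℕ, k = K + 1 := ⟨(k - 1).toNat, by omega⟩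
    obtain ⟨M, hM⟩ : ∃ M : ℕ, a - k = M + 1 := ⟨(a - k - 1).toNat, by omega⟩
    rw [qbin_eq_div (K := K + 1) (M := M + 1) (N := K + M + 1 + 1) (by omega) (by omega)
        (by omega),
      qbin_eq_div (K := K + 1) (M := M) (N := K + M + 1) (by omega) (by omega) (by omega),
      qbin_eq_div (K := K) (M := M + 1) (N := K + M + 1) (by omega) (by omega) (by omega),
      hM, ← Nat.cast_succ, zpow_natCast]
    exact pq_div_pascal hb K M
  · rw [qbin_self hb ha.le, qbin_of_lt (by omega), sub_self, zpow_zero,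
      qbin_self hb (by omega), zero_add, one_mul]
  · rw [qbin_of_lt hka, qbin_of_lt (by omega), qbin_of_lt (by omega), mul_zero, add_zero]

theorem qbin_pascal_right (hb : ¬IsOfFinOrder b) {a : ℤ} (ha : 0 < a) (k : ℤ) :
    qbin b a k = b ^ k * qbin b (a - 1) k + qbin b (a - 1) (k - 1) := by
  rw [← qbin_symm b a k, qbin_pascal_left hb ha, sub_sub_cancel, ← qbin_symm b (a - 1) k,
    ← qbin_symm b (a - 1) (k - 1), sub_sub_sub_cancel_right, sub_right_comm, add_comm]

theorem qbin_pascal_two (hb : ¬IsOfFinOrder b) (hb₀ : b ≠ 0) {a : ℤ} (ha : 1 < a) (k : ℤ) :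
    qbin b a k = b ^ k * qbin b (a - 2) k + (1 + b ^ (a - 1)) * qbin b (a - 2) (k - 1) +
      b ^ (a - k) * qbin b (a - 2) (k - 2) := by
  have hexp : b ^ (a - k) * b ^ (k - 1) = b ^ (a - 1) := by
    rw [← zpow_add₀ hb₀, sub_add_sub_cancel]
  rw [qbin_pascal_left hb (a := a) (by omega), qbin_pascal_right hb (a := a - 1) (by omega),
    qbin_pascal_right hb (a := a - 1) (by omega) (k - 1), sub_sub, sub_sub, one_add_one_eq_two,
    ← hexp]
  ring

theorem sum_pow_mul_qbin_eq_prod (hb : ¬IsOfFinOrder b) (m : ℕ) (x : F) :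
    ∑ k ∈ range (m + 1), b ^ k.choose 2 * x ^ k * qbin b m k =
      ∏ j ∈ range m, (1 + x * b ^ j) := by
  induction m generalizing x with
  | zero => simp [qbin_zero_right hb le_rfl]
  | succ m ih =>
    have hpascal (k : ℕ) : qbin b ↑(m + 1) k = b ^ k * qbin b m k + qbin b m (k - 1) := by
      rw [qbin_pascal_right hb (by omega), ← zpow_natCast]
      push_cast
      rw [add_sub_cancel_right]
    have hshift : ∑ k ∈ range (m + 1 + 1), b ^ k.choose 2 * x ^ k * (b ^ k * qbin b m k) =
        ∑ k ∈ range (m + 1), b ^ k.choose 2 * (x * b) ^ k * qbin b m k := by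
      rw [sum_range_succ, qbin_of_lt (by omega), mul_zero, mul_zero, add_zero]
      exact sum_congr rfl fun k _ => by ring
    have hlower : ∑ k ∈ range (m + 1 + 1), b ^ k.choose 2 * x ^ k * qbin b m ((k : ℤ) - 1) =
        x * ∑ k ∈ range (m + 1), b ^ k.choose 2 * (x * b) ^ k * qbin b m k := by
      rw [sum_range_succ', Nat.cast_zero, zero_sub, qbin_of_neg (by omega), mul_zero, add_zero,
        mul_sum]
      refine sum_congr rfl fun k _ => ?_
      rw [Nat.choose_succ_succ', Nat.choose_one_right, Nat.cast_succ, add_sub_cancel_right]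
      ring
    rw [sum_congr rfl fun k _ => by rw [hpascal, mul_add], sum_add_distrib, hshift, hlower, ih,
      prod_range_succ']
    simp only [pow_succ', pow_zero, mul_one, ← mul_assoc]
    ring

lemma hasFiniteSupport_mul_qbin (g : ℤ → F) (a : ℤ) {k : ℤ → ℤ} {c : ℤ}
    (hk : ∀ r, k r + 2 * r = c) :
    (fun r => g r * qbin b a (k r)).HasFiniteSupport := by
  refine (Set.finite_Icc (-|c - a|) |c|).subset fun r hr => ?_
  have := hk r
  have := le_abs_self c
  have := abs_nonneg c
  have := neg_abs_le (c - a)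
  have := abs_nonneg (c - a)
  by_contra h
  rw [Set.mem_Icc] at h
  rcases lt_or_ge (k r) 0 with h0 | h0
  · exact hr (mul_eq_zero_of_right _ (qbin_of_neg h0))
  · exact hr (mul_eq_zero_of_right _ (qbin_of_lt (by omega)))

end QBinomial

lemma q_ne_zero : q ≠ 0 := RatFunc.X_ne_zero

lemma not_isOfFinOrder_q : ¬IsOfFinOrder q := by
  rw [isOfFinOrder_iff_pow_eq_one]
  rintro ⟨k, hk, hqk⟩
  have hX : (Polynomial.X : Polynomial ℚ) ^ k = 1 :=
    RatFunc.algebraMap_injective ℚ (by rwa [map_pow, map_one, ← RatFunc.X])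
  simpa [hk.ne'] using congrArg Polynomial.natDegree hX

lemma not_isOfFinOrder_q_sq : ¬IsOfFinOrder (q ^ 2) := by
  simp [isOfFinOrder_pow, not_isOfFinOrder_q]

lemma sq_add_self_eq_two_mul_choose_two_add (k : ℕ) : k ^ 2 + k = 2 * (k.choose 2 + k) := by
  induction k with
  | zero => rfl
  | succ k ih =>
    rw [Nat.choose_succ_succ', Nat.choose_one_right]
    linarith

-- `↑(n - 1)` is truncated: for `n = 0` the primed coefficient at `a = -1` is `[0 choose k]`.
lemma qbin'_natCast_sub_one (b : F) (n : ℕ) (k : ℤ) :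
    qbin' b (n - 1) k = qbin b ↑(n - 1) k := by
  rcases n with _ | n
  · by_cases hk : k = 0
    · simp [qbin', qbin, hk, pq_zero]
    · rw [qbin', if_neg (by omega)]
      rcases lt_or_gt_of_ne hk with hk | hk
      · rw [qbin_of_neg hk, qbin_of_neg hk]
      · rw [qbin_of_lt (by omega), qbin_of_lt (by omega)]
  · rw [qbin', if_neg (by omega)]
    push_cast
    rw [add_sub_cancel_right]

theorem finsum_pow_mul_qbin'_eq_prod (n : ℕ) :
    ∑ᶠ k : ℕ, q ^ (k ^ 2 + k) * qbin' (q ^ 2) ((n : ℤ) - 1) (k : ℤ) =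
      ∏ j ∈ range (n - 1), (1 + q ^ 2 * (q ^ 2) ^ j) := by
  have hterm (k : ℕ) : q ^ (k ^ 2 + k) * qbin' (q ^ 2) ((n : ℤ) - 1) (k : ℤ) =
      (q ^ 2) ^ k.choose 2 * (q ^ 2) ^ k * qbin (q ^ 2) ↑(n - 1) k := by
    rw [qbin'_natCast_sub_one, ← pow_add, ← pow_mul, sq_add_self_eq_two_mul_choose_two_add]
  simp only [hterm]
  rw [← sum_pow_mul_qbin_eq_prod not_isOfFinOrder_q_sq]
  refine finsum_eq_sum_of_support_subset _ fun k hk => ?_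
  rw [coe_range, Set.mem_Iio]
  by_contra h
  exact hk (mul_eq_zero_of_right _ (qbin_of_lt (by omega)))

def bressoudWeight (r : ℤ) : F := (-1 : F) ^ r * q ^ (2 * r ^ 2 + r)

lemma bressoudWeight_succ_mul {r e e' : ℤ} (he : e' = e + 4 * r + 3) :
    bressoudWeight (r + 1) * q ^ e = -(bressoudWeight r * q ^ e') := by
  have hexp : q ^ (2 * (r + 1) ^ 2 + (r + 1)) * q ^ e = q ^ (2 * r ^ 2 + r) * q ^ e' := by
    rw [← zpow_add₀ q_ne_zero, ← zpow_add₀ q_ne_zero, he]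
    ring_nf
  rw [bressoudWeight, bressoudWeight, zpow_add_one₀ (by norm_num), mul_assoc, hexp]
  ring

def bressoudTerm (n r : ℤ) : F :=
  bressoudWeight r * qbin q (2 * n) (n - 2 * r + if Even r then 0 else -1)

def auxTerm (n r : ℤ) : F := bressoudWeight r * qbin q (2 * n - 1) (n - 2 * r - 1)

def bressoudCorrection (n r : ℤ) : F :=
  (if Even r then bressoudWeight r * q ^ (n - 2 * r) else 0) * qbin q (2 * n - 1) (n - 2 * r)

def auxCorrection (n r : ℤ) : F :=
  bressoudWeight r * q ^ (n - 2 * r - 1) * qbin q (2 * n - 3) (n - 2 * r - 1)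

lemma bressoudTerm_eq (n : ℤ) (hn : 0 < n) (r : ℤ) :
    bressoudTerm n r = auxTerm n r + (bressoudCorrection n r - bressoudCorrection n (r + 1)) := by
  unfold bressoudTerm auxTerm bressoudCorrection
  rcases Int.even_or_odd r with hr | hr
  · rw [if_pos hr, if_pos hr, if_neg (by simpa [Int.even_add_one] using hr), add_zero,
      qbin_pascal_right not_isOfFinOrder_q (by omega)]
    ring_nf
  · rw [if_neg (Int.not_even_iff_odd.mpr hr), if_neg (Int.not_even_iff_odd.mpr hr),
      if_pos hr.add_one, qbin_pascal_left not_isOfFinOrder_q (by omega),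
      bressoudWeight_succ_mul (e := n - 2 * (r + 1)) (e' := 2 * n - (n - 2 * r + -1)) (by ring)]
    ring_nf

lemma auxTerm_succ_eq (n : ℤ) (hn : 0 < n) (r : ℤ) :
    auxTerm (n + 1) r = (1 + q ^ (2 * n)) * auxTerm n r +
      (auxCorrection (n + 1) r - auxCorrection (n + 1) (r + 1)) := by
  unfold auxTerm auxCorrection
  rw [qbin_pascal_two not_isOfFinOrder_q q_ne_zero (by omega),
    bressoudWeight_succ_mul (e := n + 1 - 2 * (r + 1) - 1)
      (e' := 2 * (n + 1) - 1 - (n + 1 - 2 * r - 1)) (by ring)]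
  ring_nf

def auxSum (n : ℤ) : F := ∑ᶠ r, auxTerm n r

lemma hasFiniteSupport_auxTerm (n : ℤ) : (auxTerm n).HasFiniteSupport :=
  hasFiniteSupport_mul_qbin _ _ (c := n - 1) fun _ => by ring

theorem finsum_bressoudTerm_eq_auxSum (n : ℤ) (hn : 0 < n) :
    ∑ᶠ r, bressoudTerm n r = auxSum n := by
  simp only [bressoudTerm_eq n hn]
  exact finsum_add_sub_shift (hasFiniteSupport_auxTerm n)
    (hasFiniteSupport_mul_qbin _ _ (c := n) fun _ => by ring)

theorem auxSum_succ (n : ℤ) (hn : 0 < n) : auxSum (n + 1) = (1 + q ^ (2 * n)) * auxSum n := by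
  rw [auxSum, auxSum, mul_finsum]
  simp only [auxTerm_succ_eq n hn]
  exact finsum_add_sub_shift ((hasFiniteSupport_auxTerm n).fun_mul_right _)
    (hasFiniteSupport_mul_qbin _ _ (c := n) fun _ => by ring)

lemma auxSum_one : auxSum 1 = 1 := by
  rw [auxSum, finsum_eq_single _ 0 fun r hr => ?_]
  · simp [auxTerm, bressoudWeight, qbin_zero_right not_isOfFinOrder_q zero_le_one]
  · rcases lt_or_gt_of_ne hr with hr | hr
    · exact mul_eq_zero_of_right _ (qbin_of_lt (by omega))
    · exact mul_eq_zero_of_right _ (qbin_of_neg (by omega))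

theorem auxSum_natCast_add_one (m : ℕ) :
    auxSum (m + 1) = ∏ j ∈ range m, (1 + q ^ 2 * (q ^ 2) ^ j) := by
  induction m with
  | zero => simpa using auxSum_one
  | succ m ih =>
    have hq : q ^ (2 * ((m : ℤ) + 1)) = q ^ 2 * (q ^ 2) ^ m := by
      rw [← pow_succ', ← pow_mul, ← zpow_natCast]
      push_cast
      ring_nf
    rw [Nat.cast_succ, auxSum_succ _ (by omega), ih, prod_range_succ, hq, mul_comm]

theorem finsum_bressoudTerm_eq_prod (n : ℕ) :
    ∑ᶠ r, bressoudTerm n r = ∏ j ∈ range (n - 1), (1 + q ^ 2 * (q ^ 2) ^ j) := by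
  rcases n with _ | n
  · rw [finsum_eq_single _ 0 fun r hr => ?_]
    · simp [bressoudTerm, bressoudWeight, qbin_self not_isOfFinOrder_q le_rfl]
    · refine mul_eq_zero_of_right _ ?_
      rcases lt_or_gt_of_ne hr with hr | hr <;> split_ifs
      exacts [qbin_of_lt (by omega), qbin_of_lt (by omega), qbin_of_neg (by omega),
        qbin_of_neg (by omega)]
  · rw [finsum_bressoudTerm_eq_auxSum _ (by omega), Nat.cast_succ, auxSum_natCast_add_one,
      Nat.add_sub_cancel]

theorem stmt5 (n : ℕ) :
    (∑ᶠ n1 : ℕ, q ^ (n1 ^ 2 + n1) * qbin' (q ^ 2) ((n : ℤ) - 1) (n1 : ℤ)) =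
      ∑ᶠ r : ℤ, (-1 : F) ^ r * q ^ (2 * r ^ 2 + r) *
        qbin q (2 * (n : ℤ)) ((n : ℤ) - 2 * r + (if Even r then 0 else -1)) := by
  rw [finsum_pow_mul_qbin'_eq_prod]
  exact (finsum_bressoudTerm_eq_prod n).symm

end
end
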